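/- Let X be an I-continuous T0 space in which the relation ≪_I has the interpolation property (x ≪_I z implies x ≪_I y ≪_I z for some y). Then for every subset Y ⊆ X, ↟_I Y = int_{σ_I}(↑Y), where ↑Y is the upper closure of Y. -/

import Mathlib

universe u

/-- The specialisation order of a topological space: `x ≤ y` iff `x ∈ closure {y}`. -/
def sle {X : Type u} [TopologicalSpace X] (x y : X) : Prop :=
  x ∈ closure ({y} : Set X)

/-- Upper bounds with respect to the specialisation order. -/
def sUB {X : Type u} [TopologicalSpace X] (A : Set X) : Set X :=
  {u | ∀ a ∈ A, sle a u}

/-- `s` is the least upper bound of `A` with respect to the specialisation order. -/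
def sIsLUB {X : Type u} [TopologicalSpace X] (A : Set X) (s : X) : Prop :=
  s ∈ sUB A ∧ ∀ u ∈ sUB A, sle s u

/-- `x ≪_I y`: for every irreducible set `E` having a supremum above `y`,
some element of `E` is above `x`. -/
def IBelow {X : Type u} [TopologicalSpace X] (x y : X) : Prop :=
  ∀ E : Set X, IsIrreducible E → ∀ s : X, sIsLUB E s → sle y s → ∃ e ∈ E, sle x e

/-- `X` is I-continuous: for every `y`, the set `↡_I y` is irreducible with
least upper bound `y`. -/
def IContinuous (X : Type u) [TopologicalSpace X] : Prop :=
  ∀ y : X, IsIrreducible {x | IBelow x y} ∧ sIsLUB {x | IBelow x y} y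

/-- `X` is I-stable: `↟_I U` is open for every open `U`. -/
def IStable (X : Type u) [TopologicalSpace X] : Prop :=
  ∀ U : Set X, IsOpen U → IsOpen {x : X | ∃ a ∈ U, IBelow a x}

/-- `X` is sup-sober: every closed irreducible set with a supremum is the closure
of that supremum. -/
def SupSober (X : Type u) [TopologicalSpace X] : Prop :=
  ∀ F : Set X, IsClosed F → IsIrreducible F → ∀ s : X, sIsLUB F s → F = closure ({s} : Set X)

/-- The collection σ_I: upper sets (w.r.t. specialisation) inaccessible by suprema of
irreducible sets. -/
def sigmaI (X : Type u) [TopologicalSpace X] : Set (Set X) :=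
  {U | (∀ a ∈ U, ∀ b : X, sle a b → b ∈ U) ∧
       ∀ E : Set X, IsIrreducible E → ∀ s : X, sIsLUB E s → s ∈ U → (U ∩ E).Nonempty}

/-- The irreducibly derived topology τ_SI: open sets inaccessible by suprema of
irreducible sets. -/
def tauSI (X : Type u) [TopologicalSpace X] : Set (Set X) :=
  {U | IsOpen U ∧ ∀ E : Set X, IsIrreducible E → ∀ s : X, sIsLUB E s → s ∈ U → (E ∩ U).Nonempty}

/-- The net `x` I-converges to `y`: there is an irreducible set `E` with a supremum above `y`,
all of whose elements are eventual lower bounds of the net. -/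
def IConv {X : Type u} [TopologicalSpace X] {ι : Type u} [Preorder ι]
    (x : ι → X) (y : X) : Prop :=
  ∃ E : Set X, IsIrreducible E ∧
    (∀ e ∈ E, ∃ i₀ : ι, ∀ i : ι, i₀ ≤ i → sle e (x i)) ∧
    ∃ s : X, sIsLUB E s ∧ sle y s

/-- `D` is directed with respect to the specialisation order. -/
def sDirectedOn {X : Type u} [TopologicalSpace X] (D : Set X) : Prop :=
  ∀ a ∈ D, ∀ b ∈ D, ∃ c ∈ D, sle a c ∧ sle b c

/-- Way-below in the specialisation poset, via nonempty directed sets. -/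
def sWayBelow {X : Type u} [TopologicalSpace X] (x y : X) : Prop :=
  ∀ D : Set X, D.Nonempty → sDirectedOn D → ∀ s : X, sIsLUB D s → sle y s → ∃ d ∈ D, sle x d

/-- `X` is a DI space: the supremum of any irreducible set is also attained as the supremum
of a nonempty directed subset of its lower closure. -/
def DISpace (X : Type u) [TopologicalSpace X] : Prop :=
  ∀ E : Set X, IsIrreducible E → ∀ s : X, sIsLUB E s →
    ∃ D : Set X, D.Nonempty ∧ sDirectedOn D ∧ (∀ d ∈ D, ∃ e ∈ E, sle d e) ∧ sIsLUB D s

/-- `U` is τ_I-open: every net that I-converges to a point of `U` is eventually in `U`. -/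
def TauIOpen {X : Type u} [TopologicalSpace X] (U : Set X) : Prop :=
  ∀ (ι : Type u) [Preorder ι] [Nonempty ι],
    (∀ i j : ι, ∃ k : ι, i ≤ k ∧ j ≤ k) →
    ∀ x : ι → X, ∀ y ∈ U, IConv x y →
    ∃ i₀ : ι, ∀ i : ι, i₀ ≤ i → x i ∈ U

section

variable {X : Type*} [TopologicalSpace X]

theorem sle_iff_specializes {x y : X} : sle x y ↔ y ⤳ x :=
  specializes_iff_mem_closure.symm

theorem sle_refl (x : X) : sle x x :=
  sle_iff_specializes.2 specializes_rfl

theorem sle_trans {x y z : X} (hxy : sle x y) (hyz : sle y z) : sle x z :=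
  sle_iff_specializes.2 ((sle_iff_specializes.1 hyz).trans (sle_iff_specializes.1 hxy))

theorem sIsLUB_singleton (x : X) : sIsLUB {x} x :=
  ⟨fun _ ha => ha ▸ sle_refl x, fun _ hu => hu x rfl⟩

theorem IBelow.mono_left {x' x y : X} (hx : sle x' x) (h : IBelow x y) : IBelow x' y :=
  fun E hE s hs hys =>
    let ⟨e, heE, hxe⟩ := h E hE s hs hys
    ⟨e, heE, sle_trans hx hxe⟩

theorem IBelow.mono_right {x y y' : X} (h : IBelow x y) (hy : sle y y') : IBelow x y' :=
  fun E hE s hs hys => h E hE s hs (sle_trans hy hys)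

theorem IBelow.sle {x y : X} (h : IBelow x y) : sle x y := by
  obtain ⟨e, rfl, hxe⟩ := h {y} isIrreducible_singleton y (sIsLUB_singleton y) (sle_refl y)
  exact hxe

theorem setOf_iBelow_subset_setOf_sle (Y : Set X) :
    {x | ∃ y ∈ Y, IBelow y x} ⊆ {x | ∃ y ∈ Y, sle y x} :=
  fun _ ⟨y, hyY, hyx⟩ => ⟨y, hyY, hyx.sle⟩

/-- Interpolation is what makes `↟_I Y` inaccessible: from `y ≪_I z ≪_I ⋁E`, the element
`z` lies below some `e ∈ E`, and then `y ≪_I e`. -/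
theorem setOf_iBelow_mem_sigmaI
    (hint : ∀ x z : X, IBelow x z → ∃ y : X, IBelow x y ∧ IBelow y z) (Y : Set X) :
    {x | ∃ y ∈ Y, IBelow y x} ∈ sigmaI X := by
  refine ⟨fun a ⟨y, hyY, hya⟩ b hab => ⟨y, hyY, hya.mono_right hab⟩, ?_⟩
  rintro E hE s hs ⟨y, hyY, hys⟩
  obtain ⟨z, hyz, hzs⟩ := hint y s hys
  obtain ⟨e, heE, hze⟩ := hzs E hE s hs (sle_refl s)
  exact ⟨e, ⟨y, hyY, hyz.mono_right hze⟩, heE⟩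

theorem exists_iBelow_mem_of_mem_sigmaI (hcont : IContinuous X) {U : Set X}
    (hU : U ∈ sigmaI X) {x : X} (hx : x ∈ U) : ∃ z ∈ U, IBelow z x :=
  hU.2 _ (hcont x).1 x (hcont x).2 hx

end

theorem stmt13_general {X : Type u} [TopologicalSpace X]
    (hcont : IContinuous X)
    (hint : ∀ x z : X, IBelow x z → ∃ y : X, IBelow x y ∧ IBelow y z)
    (Y : Set X) :
    {x : X | ∃ y ∈ Y, IBelow y x} =
      ⋃₀ {U | U ∈ sigmaI X ∧ U ⊆ {x : X | ∃ y ∈ Y, sle y x}} := by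
  refine Set.Subset.antisymm ?_ ?_
  · exact Set.subset_sUnion_of_mem
      ⟨setOf_iBelow_mem_sigmaI hint Y, setOf_iBelow_subset_setOf_sle Y⟩
  · rintro x ⟨U, ⟨hU, hUY⟩, hxU⟩
    obtain ⟨z, hzU, hzx⟩ := exists_iBelow_mem_of_mem_sigmaI hcont hU hxU
    obtain ⟨y, hyY, hyz⟩ := hUY hzU
    exact ⟨y, hyY, hzx.mono_left hyz⟩

/-- If `X` is I-continuous and `≪_I` interpolates, then `↟_I Y = int_{σ_I}(↑Y)`. -/
theorem stmt13 {X : Type u} [TopologicalSpace X] [T0Space X]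
    (hcont : IContinuous X)
    (hint : ∀ x z : X, IBelow x z → ∃ y : X, IBelow x y ∧ IBelow y z)
    (Y : Set X) :
    {x : X | ∃ y ∈ Y, IBelow y x} =
      ⋃₀ {U | U ∈ sigmaI X ∧ U ⊆ {x : X | ∃ y ∈ Y, sle y x}} :=
  stmt13_general hcont hint Y
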